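/- arXiv:hep-th/0608226 — 4 statements merged into one kernel-verified Lean document; each statement's English description precedes it below -/
import Mathlib

section
/- Let H be a complex Hilbert space, J : H → H an antilinear isometry with J² = −1, D a self-adjoint bounded operator with JD = DJ, and γ a self-adjoint unitary with γ² = 1, γD = −Dγ and Jγ = −γJ. Define H⁺ = {ξ ∈ H : γξ = ξ}. Then the form A_D(ξ', ξ) = ⟨Jξ', Dξ⟩ restricted to H⁺ is bilinear (complex-linear in both variables) and antisymmetric: A_D(ξ', ξ) = −A_D(ξ, ξ'). -/
/-- An antilinear isometry satisfies `⟪Jx, Jy⟫ = ⟪y, x⟫`. -/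
lemma antilinear_isometry_inner {H : Type*} [NormedAddCommGroup H]
    [InnerProductSpace ℂ H] (J : H →ₛₗ[starRingEnd ℂ] H)
    (hJiso : ∀ x, ‖J x‖ = ‖x‖) (x y : H) :
    (inner ℂ (J x) (J y) : ℂ) = inner ℂ y x := by
  have e1 : ‖J x + J y‖ = ‖x + y‖ := by rw [← map_add]; exact hJiso _
  have e2 : ‖J x - J y‖ = ‖x - y‖ := by rw [← map_sub]; exact hJiso _
  have e3 : ‖J x - Complex.I • J y‖ = ‖x + Complex.I • y‖ := by
    have : J (x + Complex.I • y) = J x - Complex.I • J y := by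
      rw [map_add, LinearMap.map_smulₛₗ]
      simp [Complex.conj_I, sub_eq_add_neg, neg_smul]
    rw [← this]; exact hJiso _
  have e4 : ‖J x + Complex.I • J y‖ = ‖x - Complex.I • y‖ := by
    have : J (x - Complex.I • y) = J x + Complex.I • J y := by
      rw [map_sub, LinearMap.map_smulₛₗ]
      simp [Complex.conj_I, sub_eq_add_neg, neg_smul]
    rw [← this]; exact hJiso _
  have f3 : ‖y - Complex.I • x‖ = ‖x + Complex.I • y‖ := by
    have : (-Complex.I) • (x + Complex.I • y) = y - Complex.I • x := by
      rw [smul_add, smul_smul]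
      simp [Complex.I_mul_I]
      abel
    rw [← this, norm_smul]; simp
  have f4 : ‖y + Complex.I • x‖ = ‖x - Complex.I • y‖ := by
    have : Complex.I • (x - Complex.I • y) = y + Complex.I • x := by
      rw [smul_sub, smul_smul]
      simp [Complex.I_mul_I]
      abel
    rw [← this, norm_smul]; simp
  have g1 : ‖y + x‖ = ‖x + y‖ := by rw [add_comm]
  have g2 : ‖y - x‖ = ‖x - y‖ := norm_sub_rev _ _
  rw [inner_eq_sum_norm_sq_div_four, inner_eq_sum_norm_sq_div_four]
  simp only [RCLike.I_to_complex] at *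
  rw [e1, e2, e3, e4, f3, f4, g1, g2]

/-- On a real spectral triple of KO-dimension 2 mod 8 (`J² = −1`, `JD = DJ`,
`Jγ = −γJ`, `γD = −Dγ`), the form `A_D(ξ', ξ) = ⟨Jξ', Dξ⟩` is complex-bilinear and
antisymmetric on the even part `H⁺ = {ξ : γξ = ξ}`. -/
theorem antisymmetric_bilinear_form_KO2
    {H : Type*} [NormedAddCommGroup H] [InnerProductSpace ℂ H] [CompleteSpace H]
    (J : H →ₛₗ[starRingEnd ℂ] H) (hJiso : ∀ x, ‖J x‖ = ‖x‖)
    (hJ2 : ∀ x, J (J x) = -x)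
    (D : H →L[ℂ] H) (hD : IsSelfAdjoint D)
    (hJD : ∀ x, J (D x) = D (J x))
    (γ : H →L[ℂ] H) (hγsa : IsSelfAdjoint γ) (hγ2 : ∀ x, γ (γ x) = x)
    (hγD : ∀ x, γ (D x) = -D (γ x)) (hJγ : ∀ x, J (γ x) = -γ (J x)) :
    (∀ ξ ξ' : H, γ ξ = ξ → γ ξ' = ξ' → ∀ (c : ℂ) (η η' : H), γ η = η → γ η' = η' →
      (inner ℂ (J (c • ξ' + η')) (D ξ) : ℂ)
          = c * inner ℂ (J ξ') (D ξ) + inner ℂ (J η') (D ξ) ∧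
      (inner ℂ (J ξ') (D (c • ξ + η)) : ℂ)
          = c * inner ℂ (J ξ') (D ξ) + inner ℂ (J ξ') (D η)) ∧
    (∀ ξ ξ' : H, γ ξ = ξ → γ ξ' = ξ' →
      (inner ℂ (J ξ') (D ξ) : ℂ) = -inner ℂ (J ξ) (D ξ')) := by
  constructor
  · intro ξ ξ' _ _ c η η' _ _
    constructor
    · rw [map_add, LinearMap.map_smulₛₗ, inner_add_left, inner_smul_left]
      simp [mul_comm]
    · rw [map_add, map_smul, inner_add_right, inner_smul_right]
  · intro ξ ξ' _ _
    have key : ∀ u v : H, (inner ℂ (J u) v : ℂ) = -inner ℂ (J v) u := by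
      intro u v
      calc (inner ℂ (J u) v : ℂ) = -inner ℂ (J u) (J (J v)) := by rw [hJ2]; simp
        _ = -inner ℂ (J v) u := by rw [antilinear_isometry_inner J hJiso]
    calc (inner ℂ (J ξ') (D ξ) : ℂ) = -inner ℂ (J (D ξ)) ξ' := key _ _
      _ = -inner ℂ (D (J ξ)) ξ' := by rw [hJD]
      _ = -inner ℂ (J ξ) (D ξ') := by
          rw [← ContinuousLinearMap.adjoint_inner_right, hD.adjoint_eq]
end

section
/- For any nonzero positive semidefinite matrix P ∈ M_N(ℂ) with largest eigenvalue λ, one has λ·Tr(P)/Tr(P²) ≤ (1+√N)/2. -/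
/-!
Only the eigenvalues matter: with `μ` the spectrum, `λ = μ i₀`, `s = ∑_{i ≠ i₀} μ i` and
`q = ∑_{i ≠ i₀} μ i ^ 2`, Cauchy–Schwarz gives `s² ≤ (N - 1) q`, and then
`2 λ s ≤ (√N - 1) λ² + s² / (√N - 1) ≤ (√N - 1) λ² + (√N + 1) q` is AM-GM.
The resulting bound `λ (λ + s) ≤ (1 + √N)/2 · (λ² + q)` holds for every real family and
every index `i₀`.
-/

open Matrix
open scoped ComplexOrder

theorem Matrix.IsHermitian.trace_pow_eq_sum_eigenvalues_pow {𝕜 n : Type*} [RCLike 𝕜]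
    [Fintype n] [DecidableEq n] {A : Matrix n n 𝕜} (hA : A.IsHermitian) (k : ℕ) :
    (A ^ k).trace = ∑ i, (hA.eigenvalues i : 𝕜) ^ k := by
  conv_lhs => rw [hA.spectral_theorem, ← map_pow, Unitary.conjStarAlgAut_apply, trace_mul_cycle,
    Unitary.coe_star_mul_self, one_mul, diagonal_pow, trace_diagonal]
  simp

theorem mul_add_le_of_sq_le {a s q r : ℝ} (hr : 1 ≤ r) (hq : 0 ≤ q)
    (hs : s ^ 2 ≤ (r ^ 2 - 1) * q) : a * (a + s) ≤ (1 + r) / 2 * (a ^ 2 + q) := by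
  rcases hr.eq_or_lt with rfl | hr
  · nlinarith
  · nlinarith [sq_nonneg (s - (r - 1) * a), mul_nonneg (sub_pos.mpr hr).le hq]

section SumSq

variable {ι : Type*} [Fintype ι]

theorem apply_mul_sum_le_sum_sq (x : ι → ℝ) (i : ι) :
    x i * ∑ j, x j ≤ (1 + √(Fintype.card ι)) / 2 * ∑ j, x j ^ 2 := by
  classical
  have hcard : 1 ≤ Fintype.card ι := Fintype.card_pos_iff.mpr ⟨i⟩
  have hcs : (∑ j ∈ Finset.univ.erase i, x j) ^ 2
      ≤ ((Fintype.card ι : ℝ) - 1) * ∑ j ∈ Finset.univ.erase i, x j ^ 2 := by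
    have := sq_sum_le_card_mul_sum_sq (s := Finset.univ.erase i) (f := x)
    rwa [Finset.card_erase_of_mem (Finset.mem_univ i), Finset.card_univ,
      Nat.cast_sub hcard, Nat.cast_one] at this
  rw [← Finset.add_sum_erase _ _ (Finset.mem_univ i),
    ← Finset.add_sum_erase _ _ (Finset.mem_univ i)]
  refine mul_add_le_of_sq_le ?_ (Finset.sum_nonneg fun j _ => sq_nonneg (x j)) ?_
  · exact Real.one_le_sqrt.mpr (by exact_mod_cast hcard)
  · rwa [Real.sq_sqrt (Nat.cast_nonneg _)]

theorem iSup_mul_sum_le_sum_sq (x : ι → ℝ) :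
    (⨆ i, x i) * ∑ j, x j ≤ (1 + √(Fintype.card ι)) / 2 * ∑ j, x j ^ 2 := by
  cases isEmpty_or_nonempty ι
  · simp
  · obtain ⟨i, hi⟩ := exists_eq_ciSup_of_finite (f := x)
    rw [← hi]
    exact apply_mul_sum_le_sum_sq x i

end SumSq

theorem rho_upper_bound_general (N : ℕ) (P : Matrix (Fin N) (Fin N) ℂ)
    (hP : P.PosSemidef) :
    (⨆ i, hP.1.eigenvalues i) * (Matrix.trace P).re / (Matrix.trace (P ^ 2)).re
      ≤ (1 + Real.sqrt N) / 2 := by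
  have htr : (Matrix.trace P).re = ∑ i, hP.1.eigenvalues i := by
    simp [hP.1.trace_eq_sum_eigenvalues]
  have htr2 : (Matrix.trace (P ^ 2)).re = ∑ i, hP.1.eigenvalues i ^ 2 := by
    rw [hP.1.trace_pow_eq_sum_eigenvalues_pow]
    norm_cast
  rw [htr, htr2]
  refine div_le_of_le_mul₀ (Finset.sum_nonneg fun i _ => sq_nonneg _) (by positivity) ?_
  simpa using iSup_mul_sum_le_sum_sq hP.1.eigenvalues

/-- For any nonzero positive semidefinite `P ∈ M_N(ℂ)` with largest eigenvalue `λ`,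
one has `λ·Tr(P)/Tr(P²) ≤ (1+√N)/2`. -/
theorem rho_upper_bound (N : ℕ) (hN : 0 < N) (P : Matrix (Fin N) (Fin N) ℂ)
    (hP : P.PosSemidef) (hP0 : P ≠ 0) :
    (⨆ i, hP.1.eigenvalues i) * (Matrix.trace P).re / (Matrix.trace (P ^ 2)).re
      ≤ (1 + Real.sqrt N) / 2 :=
  rho_upper_bound_general N P hP
end

section
/- Let D(M) and D(M') be the finite Dirac operators determined by matrix data (M_e, M_ν, M_d, M_u, M_R) and primed data, with M_R, M_R' symmetric. If there exist unitary 3×3 matrices V₁,V₂,V₃,W₁,W₂,W₃ with M'_e = V₁M_eV₃*, M'_ν = V₂M_νV₃*, M'_d = W₁M_dW₃*, M'_u = W₂M_uW₃*, M'_R = V₂M_R V₂^T (i.e. V₂ M_R conjugate-transpose-bar pattern V₂-bar*), then D(M) and D(M') are conjugate by a unitary operator on H_F commuting with the algebra action, γ_F, and J_F. -/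
open Matrix
open Kronecker
open scoped Quaternion

namespace SpectralSM

/-- The algebra `A_F = ℂ ⊕ ℍ ⊕ M₃(ℂ)`. -/
abbrev AF : Type := ℂ × ℍ[ℝ] × Matrix (Fin 3) (Fin 3) ℂ

/-- Lepton index: site `(ν_R, e_R, ν_L, e_L)` × generation. -/
abbrev Ll : Type := Fin 4 × Fin 3
/-- Quark index: (site `(u_R, d_R, u_L, d_L)` × generation) × color. -/
abbrev Lq : Type := (Fin 4 × Fin 3) × Fin 3
/-- Particle index. -/
abbrev L : Type := Ll ⊕ Lq
/-- Index of `H_F`: particles ⊕ antiparticles. -/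
abbrev IF : Type := L ⊕ L

/-- The `4×4` (generation-valued) Yukawa block in the basis `(f_R, f'_R, f_L, f'_L)`. -/
noncomputable def yukawaBlock (Mup Mdown : Matrix (Fin 3) (Fin 3) ℂ) :
    Matrix (Fin 4 × Fin 3) (Fin 4 × Fin 3) ℂ :=
  Matrix.of fun p q =>
    if p.1 = 0 ∧ q.1 = 2 then Mup p.2 q.2
    else if p.1 = 1 ∧ q.1 = 3 then Mdown p.2 q.2
    else if p.1 = 2 ∧ q.1 = 0 then Mupᴴ p.2 q.2
    else if p.1 = 3 ∧ q.1 = 1 then Mdownᴴ p.2 q.2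
    else 0

/-- The operator `S = S_ℓ ⊕ (S_q ⊗ 1₃)` on the particle sector. -/
noncomputable def Sop (Mν Me Mu Md : Matrix (Fin 3) (Fin 3) ℂ) : Matrix L L ℂ :=
  fromBlocks (yukawaBlock Mν Me) 0 0
    (yukawaBlock Mu Md ⊗ₖ (1 : Matrix (Fin 3) (Fin 3) ℂ))

/-- The Majorana block `T`, supported on `ν_R`, given by `M_R`. -/
noncomputable def Top (MR : Matrix (Fin 3) (Fin 3) ℂ) : Matrix L L ℂ :=
  fromBlocks (Matrix.of fun p q => if p.1 = 0 ∧ q.1 = 0 then MR p.2 q.2 else 0) 0 0 0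

/-- The finite Dirac operator `D(M) = [[S, T*],[T, S̄]]` on `H_F`. -/
noncomputable def Dirac (Mν Me Mu Md MR : Matrix (Fin 3) (Fin 3) ℂ) :
    Matrix IF IF ℂ :=
  fromBlocks (Sop Mν Me Mu Md) (Top MR) (Top MR)ᴴ
    ((Sop Mν Me Mu Md).map (starRingEnd ℂ))

/-- The standard embedding of the quaternions into `M₂(ℂ)`. -/
noncomputable def quatToM2 (q : ℍ[ℝ]) : Matrix (Fin 2) (Fin 2) ℂ :=
  !![⟨q.re, q.imI⟩, ⟨q.imJ, q.imK⟩; ⟨-q.imJ, q.imK⟩, ⟨q.re, -q.imI⟩]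

/-- Per-site action of `(λ, q) ∈ ℂ ⊕ ℍ` on `(f_R, f'_R, f_L, f'_L)`. -/
noncomputable def siteAction (l : ℂ) (q : ℍ[ℝ]) : Matrix (Fin 4) (Fin 4) ℂ :=
  !![l, 0, 0, 0;
     0, starRingEnd ℂ l, 0, 0;
     0, 0, quatToM2 q 0 0, quatToM2 q 0 1;
     0, 0, quatToM2 q 1 0, quatToM2 q 1 1]

/-- The representation of `A_F` on `H_F`: `(λ, λ̄)` on right-handed and `q` on
left-handed particles (with generation and color multiplicity), `λ` on
antileptons and `m` (on color) on antiquarks. -/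
noncomputable def rep (u : AF) : Matrix IF IF ℂ :=
  fromBlocks
    (fromBlocks (siteAction u.1 u.2.1 ⊗ₖ (1 : Matrix (Fin 3) (Fin 3) ℂ)) 0 0
      ((siteAction u.1 u.2.1 ⊗ₖ (1 : Matrix (Fin 3) (Fin 3) ℂ)) ⊗ₖ
        (1 : Matrix (Fin 3) (Fin 3) ℂ)))
    0 0
    (fromBlocks (u.1 • (1 : Matrix Ll Ll ℂ)) 0 0
      ((1 : Matrix (Fin 4 × Fin 3) (Fin 4 × Fin 3) ℂ) ⊗ₖ u.2.2))

/-- The grading `γ_F`: `−1` on right-handed particles, `+1` on left-handed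
particles, and the opposite signs on antiparticles (KO-dimension 6). -/
noncomputable def gradingL : Matrix L L ℂ :=
  fromBlocks ((Matrix.diagonal ![-1, -1, 1, 1]) ⊗ₖ (1 : Matrix (Fin 3) (Fin 3) ℂ)) 0 0
    (((Matrix.diagonal ![-1, -1, 1, 1]) ⊗ₖ (1 : Matrix (Fin 3) (Fin 3) ℂ)) ⊗ₖ
      (1 : Matrix (Fin 3) (Fin 3) ℂ))

noncomputable def gammaF : Matrix IF IF ℂ := fromBlocks gradingL 0 0 (-gradingL)

/-- The matrix part of the real structure `J_F = K ∘ (complex conjugation)`: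
the swap of particles and antiparticles. -/
noncomputable def KF : Matrix IF IF ℂ := fromBlocks 0 1 1 0

/- ===== auxiliary infrastructure ===== -/

section Aux

/-- Site-block matrices on `Fin 4 × Fin 3`. -/
noncomputable def sblk (F : Fin 4 → Fin 4 → Matrix (Fin 3) (Fin 3) ℂ) :
    Matrix (Fin 4 × Fin 3) (Fin 4 × Fin 3) ℂ :=
  Matrix.of fun p q => F p.1 q.1 p.2 q.2

lemma sblk_congr {F G : Fin 4 → Fin 4 → Matrix (Fin 3) (Fin 3) ℂ}
    (h : ∀ i j, F i j = G i j) : sblk F = sblk G := by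
  ext ⟨i, a⟩ ⟨j, b⟩
  rw [sblk, sblk]
  simp only [Matrix.of_apply]
  rw [h]

lemma sblk_mul (F G : Fin 4 → Fin 4 → Matrix (Fin 3) (Fin 3) ℂ) :
    sblk F * sblk G = sblk (fun i k => ∑ j, F i j * G j k) := by
  ext ⟨i, a⟩ ⟨k, c⟩
  simp [sblk, Matrix.mul_apply, Fintype.sum_prod_type, Matrix.sum_apply,
    Finset.sum_comm (γ := Fin 3)]

lemma sblk_conjTranspose (F : Fin 4 → Fin 4 → Matrix (Fin 3) (Fin 3) ℂ) :
    (sblk F)ᴴ = sblk (fun i j => (F j i)ᴴ) := by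
  ext ⟨i, a⟩ ⟨j, b⟩
  simp [sblk, conjTranspose_apply]

lemma sblk_map (F : Fin 4 → Fin 4 → Matrix (Fin 3) (Fin 3) ℂ) :
    (sblk F).map (starRingEnd ℂ) = sblk (fun i j => (F i j).map (starRingEnd ℂ)) := by
  ext ⟨i, a⟩ ⟨j, b⟩
  simp [sblk]

lemma sblk_one : sblk (fun i j => if i = j then 1 else 0) = 1 := by
  ext ⟨i, a⟩ ⟨j, b⟩
  by_cases h : i = j
  · subst h
    simp [sblk, one_apply, Prod.ext_iff]
  · simp [sblk, one_apply, Prod.ext_iff, h]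

/-- Site-diagonal block matrices. -/
noncomputable def dblk (d : Fin 4 → Matrix (Fin 3) (Fin 3) ℂ) :
    Matrix (Fin 4 × Fin 3) (Fin 4 × Fin 3) ℂ :=
  sblk (fun i j => if i = j then d i else 0)

lemma dblk_mul_sblk (d : Fin 4 → Matrix (Fin 3) (Fin 3) ℂ)
    (F : Fin 4 → Fin 4 → Matrix (Fin 3) (Fin 3) ℂ) :
    dblk d * sblk F = sblk (fun i k => d i * F i k) := by
  rw [dblk, sblk_mul]
  exact sblk_congr fun i k => by simp [ite_mul]

lemma sblk_mul_dblk (d : Fin 4 → Matrix (Fin 3) (Fin 3) ℂ)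
    (F : Fin 4 → Fin 4 → Matrix (Fin 3) (Fin 3) ℂ) :
    sblk F * dblk d = sblk (fun i k => F i k * d k) := by
  rw [dblk, sblk_mul]
  exact sblk_congr fun i k => by simp [mul_ite]

lemma dblk_conjTranspose (d : Fin 4 → Matrix (Fin 3) (Fin 3) ℂ) :
    (dblk d)ᴴ = dblk (fun i => (d i)ᴴ) := by
  rw [dblk, dblk, sblk_conjTranspose]
  exact sblk_congr fun i j => by
    by_cases h : i = j
    · subst h; simp
    · simp [h, Ne.symm h]

lemma dblk_map (d : Fin 4 → Matrix (Fin 3) (Fin 3) ℂ) :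
    (dblk d).map (starRingEnd ℂ) = dblk (fun i => (d i).map (starRingEnd ℂ)) := by
  rw [dblk, dblk, sblk_map]
  exact sblk_congr fun i j => by by_cases h : i = j <;> simp [h]

lemma dblk_mul_dblk (d e : Fin 4 → Matrix (Fin 3) (Fin 3) ℂ) :
    dblk d * dblk e = dblk (fun i => d i * e i) := by
  rw [dblk, dblk, dblk, sblk_mul]
  exact sblk_congr fun i k => by by_cases h : i = k <;> simp [h]

lemma dblk_one : dblk (fun _ => 1) = 1 := sblk_one

lemma dblk_congr {d e : Fin 4 → Matrix (Fin 3) (Fin 3) ℂ} (h : ∀ i, d i = e i) :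
    dblk d = dblk e := by
  rw [dblk, dblk]
  exact sblk_congr fun i j => by rw [h]

lemma dblk_mul_sblk_mul_dblk (d e : Fin 4 → Matrix (Fin 3) (Fin 3) ℂ)
    (F : Fin 4 → Fin 4 → Matrix (Fin 3) (Fin 3) ℂ) :
    dblk d * sblk F * (dblk e)ᴴ = sblk (fun i k => d i * F i k * (e k)ᴴ) := by
  rw [dblk_conjTranspose, dblk_mul_sblk, sblk_mul_dblk]

/- Kronecker-with-one lemmas -/

lemma kron_one_conjTranspose {n m : Type*} [Fintype n] [Fintype m] [DecidableEq m]
    (P : Matrix n n ℂ) :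
    (P ⊗ₖ (1 : Matrix m m ℂ))ᴴ = Pᴴ ⊗ₖ (1 : Matrix m m ℂ) := by
  ext ⟨i, a⟩ ⟨j, b⟩
  simp [conjTranspose_apply, one_apply, apply_ite (starRingEnd ℂ), eq_comm]

lemma kron_one_map {n m : Type*} [Fintype n] [Fintype m] [DecidableEq m]
    (P : Matrix n n ℂ) :
    (P ⊗ₖ (1 : Matrix m m ℂ)).map (starRingEnd ℂ)
      = P.map (starRingEnd ℂ) ⊗ₖ (1 : Matrix m m ℂ) := by
  ext ⟨i, a⟩ ⟨j, b⟩
  simp [one_apply, apply_ite (starRingEnd ℂ)]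

lemma conjTranspose_map_conj {n m : Type*} (M : Matrix n m ℂ) :
    (M.map (starRingEnd ℂ))ᴴ = Mᵀ := by
  ext i j
  simp [conjTranspose_apply]

lemma map_conj_conjTranspose {n m : Type*} (M : Matrix n m ℂ) :
    (Mᴴ).map (starRingEnd ℂ) = (M.map (starRingEnd ℂ))ᴴ := by
  ext i j
  simp [conjTranspose_apply]

lemma map_conj_conj {n m : Type*} (M : Matrix n m ℂ) :
    (M.map (starRingEnd ℂ)).map (starRingEnd ℂ) = M := by
  ext i j
  simp

/- structural identities -/

noncomputable def yuk (X Y : Matrix (Fin 3) (Fin 3) ℂ) :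
    Fin 4 → Fin 4 → Matrix (Fin 3) (Fin 3) ℂ := fun i j =>
  if i = 0 ∧ j = 2 then X
  else if i = 1 ∧ j = 3 then Y
  else if i = 2 ∧ j = 0 then Xᴴ
  else if i = 3 ∧ j = 1 then Yᴴ
  else 0

lemma yukawaBlock_eq_sblk (X Y : Matrix (Fin 3) (Fin 3) ℂ) :
    yukawaBlock X Y = sblk (yuk X Y) := by
  ext ⟨i, a⟩ ⟨j, b⟩
  simp [yukawaBlock, sblk, yuk,
    apply_ite (fun M : Matrix (Fin 3) (Fin 3) ℂ => M a b)]

noncomputable def topF (MR : Matrix (Fin 3) (Fin 3) ℂ) :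
    Fin 4 → Fin 4 → Matrix (Fin 3) (Fin 3) ℂ := fun i j =>
  if i = 0 ∧ j = 0 then MR else 0

lemma top_eq_sblk (MR : Matrix (Fin 3) (Fin 3) ℂ) :
    (Matrix.of fun p q : Fin 4 × Fin 3 => if p.1 = 0 ∧ q.1 = 0 then MR p.2 q.2 else 0)
      = sblk (topF MR) := by
  ext ⟨i, a⟩ ⟨j, b⟩
  simp [sblk, topF, apply_ite (fun M : Matrix (Fin 3) (Fin 3) ℂ => M a b)]

/-- Conjugation of the Yukawa block by the site-diagonal unitary. -/
lemma yukawa_conj (A B C X Y X' Y' : Matrix (Fin 3) (Fin 3) ℂ)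
    (hX : X' = A * X * Cᴴ) (hY : Y' = B * Y * Cᴴ) :
    dblk ![A, B, C, C] * yukawaBlock X Y * (dblk ![A, B, C, C])ᴴ
      = yukawaBlock X' Y' := by
  rw [yukawaBlock_eq_sblk, yukawaBlock_eq_sblk, dblk_mul_sblk_mul_dblk]
  refine sblk_congr fun i k => ?_
  subst hX hY
  fin_cases i <;> fin_cases k <;>
    simp [yuk, Matrix.conjTranspose_mul, mul_assoc]

/-- Conjugation of the Majorana block. -/
lemma top_conj (A B C MR : Matrix (Fin 3) (Fin 3) ℂ) :
    dblk ![A, B, C, C] * sblk (topF MR)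
        * ((dblk ![A, B, C, C]).map (starRingEnd ℂ))ᴴ
      = sblk (topF (A * MR * Aᵀ)) := by
  rw [dblk_map, dblk_mul_sblk_mul_dblk]
  refine sblk_congr fun i k => ?_
  fin_cases i <;> fin_cases k <;>
    simp [topF, conjTranspose_map_conj]

lemma kron_one_eq_sblk (s : Matrix (Fin 4) (Fin 4) ℂ) :
    s ⊗ₖ (1 : Matrix (Fin 3) (Fin 3) ℂ) = sblk (fun i j => s i j • 1) := by
  ext ⟨i, a⟩ ⟨j, b⟩
  simp [sblk, Matrix.smul_apply, smul_eq_mul]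

/-- `dblk ![A,B,C,C]` commutes with `siteAction l q ⊗ₖ 1`. -/
lemma dblk_comm_site (A B C : Matrix (Fin 3) (Fin 3) ℂ) (l : ℂ) (q : ℍ[ℝ]) :
    dblk ![A, B, C, C] * (siteAction l q ⊗ₖ (1 : Matrix (Fin 3) (Fin 3) ℂ))
      = (siteAction l q ⊗ₖ (1 : Matrix (Fin 3) (Fin 3) ℂ)) * dblk ![A, B, C, C] := by
  rw [kron_one_eq_sblk, dblk_mul_sblk, sblk_mul_dblk]
  refine sblk_congr fun i k => ?_
  fin_cases i <;> fin_cases k <;>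
    simp [siteAction, Matrix.mul_smul, Matrix.smul_mul, Matrix.vecHead, Matrix.vecTail]

lemma diag_kron_eq_dblk (dv : Fin 4 → ℂ) :
    (Matrix.diagonal dv) ⊗ₖ (1 : Matrix (Fin 3) (Fin 3) ℂ)
      = dblk (fun i => dv i • 1) := by
  ext ⟨i, a⟩ ⟨j, b⟩
  by_cases h : i = j
  · subst h; simp [dblk, sblk, Matrix.diagonal, Matrix.smul_apply, smul_eq_mul]
  · simp [dblk, sblk, Matrix.diagonal, h]

/-- `dblk d` commutes with any scalar site-diagonal. -/
lemma dblk_comm_scalar (d : Fin 4 → Matrix (Fin 3) (Fin 3) ℂ) (dv : Fin 4 → ℂ) :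
    dblk d * dblk (fun i => dv i • 1) = dblk (fun i => dv i • 1) * dblk d := by
  rw [dblk_mul_dblk, dblk_mul_dblk]
  exact dblk_congr fun i => by simp [Matrix.mul_smul, Matrix.smul_mul]

/-- unitarity of the site-diagonal block. -/
lemma dblk_unitary (A B C : Matrix (Fin 3) (Fin 3) ℂ)
    (hA : A * Aᴴ = 1) (hB : B * Bᴴ = 1) (hC : C * Cᴴ = 1) :
    dblk ![A, B, C, C] * (dblk ![A, B, C, C])ᴴ = 1 := by
  rw [dblk_conjTranspose, dblk_mul_dblk, ← dblk_one]
  exact dblk_congr fun i => by fin_cases i <;> simpa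

end Aux
section Aux2

/-- The particle-sector unitary. -/
noncomputable def ULmat (A B C A' B' C' : Matrix (Fin 3) (Fin 3) ℂ) : Matrix L L ℂ :=
  fromBlocks (dblk ![A, B, C, C]) 0 0
    (dblk ![A', B', C', C'] ⊗ₖ (1 : Matrix (Fin 3) (Fin 3) ℂ))

variable (A B C A' B' C' : Matrix (Fin 3) (Fin 3) ℂ)

lemma ULmat_unitary (hA : A * Aᴴ = 1) (hB : B * Bᴴ = 1) (hC : C * Cᴴ = 1)
    (hA' : A' * A'ᴴ = 1) (hB' : B' * B'ᴴ = 1) (hC' : C' * C'ᴴ = 1) :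
    ULmat A B C A' B' C' * (ULmat A B C A' B' C')ᴴ = 1 := by
  rw [ULmat, fromBlocks_conjTranspose, fromBlocks_multiply, kron_one_conjTranspose]
  simp only [Matrix.mul_zero, Matrix.zero_mul, add_zero, zero_add, conjTranspose_zero,
    ← mul_kronecker_mul, Matrix.mul_one, Matrix.one_mul]
  rw [dblk_unitary A B C hA hB hC, dblk_unitary A' B' C' hA' hB' hC', one_kronecker_one,
    fromBlocks_one]

lemma ULmat_S (Mν Me Mu Md : Matrix (Fin 3) (Fin 3) ℂ) :
    ULmat A B C A' B' C' * Sop Mν Me Mu Md * (ULmat A B C A' B' C')ᴴ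
      = Sop (A * Mν * Cᴴ) (B * Me * Cᴴ) (A' * Mu * C'ᴴ) (B' * Md * C'ᴴ) := by
  rw [ULmat, Sop, Sop, fromBlocks_conjTranspose, fromBlocks_multiply, fromBlocks_multiply,
    kron_one_conjTranspose]
  simp only [Matrix.mul_zero, Matrix.zero_mul, add_zero, zero_add, conjTranspose_zero,
    ← mul_kronecker_mul, Matrix.mul_one, Matrix.one_mul]
  rw [yukawa_conj A B C Mν Me _ _ rfl rfl, yukawa_conj A' B' C' Mu Md _ _ rfl rfl]

lemma ULmat_map : (ULmat A B C A' B' C').map (starRingEnd ℂ)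
    = fromBlocks ((dblk ![A, B, C, C]).map (starRingEnd ℂ)) 0 0
        ((dblk ![A', B', C', C']).map (starRingEnd ℂ) ⊗ₖ (1 : Matrix (Fin 3) (Fin 3) ℂ)) := by
  rw [ULmat, fromBlocks_map, kron_one_map]
  simp

lemma ULmat_T (MR : Matrix (Fin 3) (Fin 3) ℂ) :
    ULmat A B C A' B' C' * Top MR * ((ULmat A B C A' B' C').map (starRingEnd ℂ))ᴴ
      = Top (A * MR * Aᵀ) := by
  rw [ULmat_map, Top, Top, top_eq_sblk, top_eq_sblk, ULmat, fromBlocks_conjTranspose,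
    fromBlocks_multiply, fromBlocks_multiply]
  simp only [Matrix.mul_zero, Matrix.zero_mul, add_zero, zero_add, conjTranspose_zero]
  rw [top_conj A B C MR]

lemma ULmat_rep_particle (l : ℂ) (q : ℍ[ℝ]) :
    ULmat A B C A' B' C' *
      (fromBlocks (siteAction l q ⊗ₖ (1 : Matrix (Fin 3) (Fin 3) ℂ)) 0 0
        ((siteAction l q ⊗ₖ (1 : Matrix (Fin 3) (Fin 3) ℂ)) ⊗ₖ (1 : Matrix (Fin 3) (Fin 3) ℂ)))
    = (fromBlocks (siteAction l q ⊗ₖ (1 : Matrix (Fin 3) (Fin 3) ℂ)) 0 0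
        ((siteAction l q ⊗ₖ (1 : Matrix (Fin 3) (Fin 3) ℂ)) ⊗ₖ (1 : Matrix (Fin 3) (Fin 3) ℂ)))
      * ULmat A B C A' B' C' := by
  rw [ULmat, fromBlocks_multiply, fromBlocks_multiply]
  simp only [Matrix.mul_zero, Matrix.zero_mul, add_zero, zero_add,
    ← mul_kronecker_mul, Matrix.mul_one, Matrix.one_mul]
  rw [dblk_comm_site A B C l q, dblk_comm_site A' B' C' l q]

lemma ULmat_rep_anti (l : ℂ) (m : Matrix (Fin 3) (Fin 3) ℂ) :
    (ULmat A B C A' B' C').map (starRingEnd ℂ) *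
      (fromBlocks (l • (1 : Matrix Ll Ll ℂ)) 0 0
        ((1 : Matrix (Fin 4 × Fin 3) (Fin 4 × Fin 3) ℂ) ⊗ₖ m))
    = (fromBlocks (l • (1 : Matrix Ll Ll ℂ)) 0 0
        ((1 : Matrix (Fin 4 × Fin 3) (Fin 4 × Fin 3) ℂ) ⊗ₖ m))
      * (ULmat A B C A' B' C').map (starRingEnd ℂ) := by
  rw [ULmat_map, fromBlocks_multiply, fromBlocks_multiply]
  simp only [Matrix.mul_zero, Matrix.zero_mul, add_zero, zero_add,
    ← mul_kronecker_mul, Matrix.mul_one, Matrix.one_mul]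
  rw [Matrix.mul_smul, Matrix.smul_mul, Matrix.mul_one, Matrix.one_mul]

lemma gradingL_eq : gradingL = fromBlocks (dblk (fun i => (![-1, -1, 1, 1] : Fin 4 → ℂ) i • 1))
    0 0 (dblk (fun i => (![-1, -1, 1, 1] : Fin 4 → ℂ) i • 1) ⊗ₖ (1 : Matrix (Fin 3) (Fin 3) ℂ)) := by
  rw [gradingL, diag_kron_eq_dblk]

lemma ULmat_grading :
    ULmat A B C A' B' C' * gradingL = gradingL * ULmat A B C A' B' C' := by
  rw [ULmat, gradingL_eq, fromBlocks_multiply, fromBlocks_multiply]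
  simp only [Matrix.mul_zero, Matrix.zero_mul, add_zero, zero_add,
    ← mul_kronecker_mul, Matrix.mul_one, Matrix.one_mul]
  rw [dblk_comm_scalar ![A, B, C, C], dblk_comm_scalar ![A', B', C', C']]

lemma gradingL_map : gradingL.map (starRingEnd ℂ) = gradingL := by
  rw [gradingL_eq, fromBlocks_map, kron_one_map, dblk_map]
  have h : ∀ i, ((fun i => (![-1, -1, 1, 1] : Fin 4 → ℂ) i • (1 : Matrix (Fin 3) (Fin 3) ℂ)) i).map (starRingEnd ℂ)
      = (![-1, -1, 1, 1] : Fin 4 → ℂ) i • (1 : Matrix (Fin 3) (Fin 3) ℂ) := by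
    intro i
    fin_cases i <;>
      · ext a b
        by_cases hab : a = b <;> simp [one_apply, hab]
  rw [dblk_congr h]
  simp

end Aux2

/-- Sufficiency direction of the classification of Dirac operators: if
`M'_e = V₁M_eV₃*`, `M'_ν = V₂M_νV₃*`, `M'_d = W₁M_dW₃*`, `M'_u = W₂M_uW₃*` and
`M'_R = V₂M_R(V̄₂)* = V₂M_RV₂ᵀ` for unitaries `Vⱼ, Wⱼ`, then `D(M)` and `D(M')`
are conjugate by a unitary commuting with the action of `A_F`, with `γ_F`, and
with the (antilinear) `J_F`. -/
theorem dirac_conjugation_of_unitary_data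
    (Mν Me Mu Md MR Mν' Me' Mu' Md' MR' : Matrix (Fin 3) (Fin 3) ℂ)
    (hMR : MRᵀ = MR) (hMR' : MR'ᵀ = MR')
    (V₁ V₂ V₃ W₁ W₂ W₃ : Matrix (Fin 3) (Fin 3) ℂ)
    (hV₁ : V₁ ∈ Matrix.unitaryGroup (Fin 3) ℂ)
    (hV₂ : V₂ ∈ Matrix.unitaryGroup (Fin 3) ℂ)
    (hV₃ : V₃ ∈ Matrix.unitaryGroup (Fin 3) ℂ)
    (hW₁ : W₁ ∈ Matrix.unitaryGroup (Fin 3) ℂ)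
    (hW₂ : W₂ ∈ Matrix.unitaryGroup (Fin 3) ℂ)
    (hW₃ : W₃ ∈ Matrix.unitaryGroup (Fin 3) ℂ)
    (he : Me' = V₁ * Me * V₃ᴴ) (hν : Mν' = V₂ * Mν * V₃ᴴ)
    (hd : Md' = W₁ * Md * W₃ᴴ) (hu : Mu' = W₂ * Mu * W₃ᴴ)
    (hR : MR' = V₂ * MR * V₂ᵀ) :
    ∃ U : Matrix IF IF ℂ,
      U ∈ Matrix.unitaryGroup IF ℂ ∧
      U * Dirac Mν Me Mu Md MR * Uᴴ = Dirac Mν' Me' Mu' Md' MR' ∧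
      (∀ a : AF, U * rep a = rep a * U) ∧
      U * gammaF = gammaF * U ∧
      U * KF = KF * U.map (starRingEnd ℂ) := by
  have hu1 : V₁ * V₁ᴴ = 1 := by
    simpa [Matrix.star_eq_conjTranspose] using Matrix.mem_unitaryGroup_iff.mp hV₁
  have hu2 : V₂ * V₂ᴴ = 1 := by
    simpa [Matrix.star_eq_conjTranspose] using Matrix.mem_unitaryGroup_iff.mp hV₂
  have hu3 : V₃ * V₃ᴴ = 1 := by
    simpa [Matrix.star_eq_conjTranspose] using Matrix.mem_unitaryGroup_iff.mp hV₃
  have hw1 : W₁ * W₁ᴴ = 1 := by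
    simpa [Matrix.star_eq_conjTranspose] using Matrix.mem_unitaryGroup_iff.mp hW₁
  have hw2 : W₂ * W₂ᴴ = 1 := by
    simpa [Matrix.star_eq_conjTranspose] using Matrix.mem_unitaryGroup_iff.mp hW₂
  have hw3 : W₃ * W₃ᴴ = 1 := by
    simpa [Matrix.star_eq_conjTranspose] using Matrix.mem_unitaryGroup_iff.mp hW₃
  have hULu : ULmat V₂ V₁ V₃ W₂ W₁ W₃ * (ULmat V₂ V₁ V₃ W₂ W₁ W₃)ᴴ = 1 :=
    ULmat_unitary V₂ V₁ V₃ W₂ W₁ W₃ hu2 hu1 hu3 hw2 hw1 hw3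
  have hULcu : (ULmat V₂ V₁ V₃ W₂ W₁ W₃).map (starRingEnd ℂ) *
      ((ULmat V₂ V₁ V₃ W₂ W₁ W₃).map (starRingEnd ℂ))ᴴ = 1 := by
    rw [← map_conj_conjTranspose, ← Matrix.map_mul, hULu]
    exact Matrix.map_one _ (map_zero _) (map_one _)
  refine ⟨fromBlocks (ULmat V₂ V₁ V₃ W₂ W₁ W₃) 0 0
      ((ULmat V₂ V₁ V₃ W₂ W₁ W₃).map (starRingEnd ℂ)), ?_, ?_, ?_, ?_, ?_⟩
  · -- unitarity
    rw [Matrix.mem_unitaryGroup_iff, Matrix.star_eq_conjTranspose, fromBlocks_conjTranspose,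
      fromBlocks_multiply]
    simp only [Matrix.mul_zero, Matrix.zero_mul, add_zero, zero_add, conjTranspose_zero]
    rw [hULu, hULcu, fromBlocks_one]
  · -- Dirac conjugation
    have hS' : ULmat V₂ V₁ V₃ W₂ W₁ W₃ * Sop Mν Me Mu Md * (ULmat V₂ V₁ V₃ W₂ W₁ W₃)ᴴ
        = Sop Mν' Me' Mu' Md' := by
      rw [hν, he, hu, hd]
      exact ULmat_S V₂ V₁ V₃ W₂ W₁ W₃ Mν Me Mu Md
    have hT' : ULmat V₂ V₁ V₃ W₂ W₁ W₃ * Top MR *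
        ((ULmat V₂ V₁ V₃ W₂ W₁ W₃).map (starRingEnd ℂ))ᴴ = Top MR' := by
      rw [hR]
      exact ULmat_T V₂ V₁ V₃ W₂ W₁ W₃ MR
    have hTc : (ULmat V₂ V₁ V₃ W₂ W₁ W₃).map (starRingEnd ℂ) * (Top MR)ᴴ *
        (ULmat V₂ V₁ V₃ W₂ W₁ W₃)ᴴ = (Top MR')ᴴ := by
      simpa [Matrix.conjTranspose_mul, Matrix.mul_assoc] using
        congrArg conjTranspose hT'
    have hSc : (ULmat V₂ V₁ V₃ W₂ W₁ W₃).map (starRingEnd ℂ) *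
        (Sop Mν Me Mu Md).map (starRingEnd ℂ) *
        ((ULmat V₂ V₁ V₃ W₂ W₁ W₃).map (starRingEnd ℂ))ᴴ
        = (Sop Mν' Me' Mu' Md').map (starRingEnd ℂ) := by
      rw [← map_conj_conjTranspose, ← Matrix.map_mul, ← Matrix.map_mul, hS']
    rw [Dirac, Dirac, fromBlocks_conjTranspose, fromBlocks_multiply, fromBlocks_multiply]
    simp only [Matrix.mul_zero, Matrix.zero_mul, add_zero, zero_add, conjTranspose_zero]
    rw [hS', hT', hTc, hSc]
  · -- rep commutation
    intro a
    rw [rep, fromBlocks_multiply, fromBlocks_multiply]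
    simp only [Matrix.mul_zero, Matrix.zero_mul, add_zero, zero_add]
    rw [ULmat_rep_particle, ULmat_rep_anti]
  · -- grading
    have hgc : (ULmat V₂ V₁ V₃ W₂ W₁ W₃).map (starRingEnd ℂ) * gradingL
        = gradingL * (ULmat V₂ V₁ V₃ W₂ W₁ W₃).map (starRingEnd ℂ) := by
      conv_lhs => rw [← gradingL_map]
      rw [← Matrix.map_mul, ULmat_grading, Matrix.map_mul, gradingL_map]
    rw [gammaF, fromBlocks_multiply, fromBlocks_multiply]
    simp only [Matrix.mul_zero, Matrix.zero_mul, add_zero, zero_add, Matrix.mul_neg,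
      Matrix.neg_mul, neg_zero]
    rw [ULmat_grading, hgc]
  · -- J_F
    rw [KF, fromBlocks_map, fromBlocks_multiply, fromBlocks_multiply, map_conj_conj]
    simp only [Matrix.mul_zero, Matrix.zero_mul, add_zero, zero_add, Matrix.mul_one,
      Matrix.one_mul, Matrix.map_zero _ (map_zero _)]

end SpectralSM
end

section
/- Let P ∈ M_N(ℂ) be positive semidefinite, nonzero, with eigenvalues λ₁ ≥ λ₂ ≥ ... ≥ λ_N ≥ 0. Then λ₁·(λ₁ + ... + λ_N) ≤ ((1+√N)/2)·(λ₁² + ... + λ_N²), and equality is attained for some P (namely with λ₂ = ... = λ_N all equal to λ₁/√N). -/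
open Matrix
open scoped ComplexOrder

section Aux

open Finset

private lemma key_ineq (N : ℕ) (hN : 0 < N) (f : Fin N → ℝ) (hf : ∀ i, 0 ≤ f i) :
    (⨆ i, f i) * (∑ i, f i) ≤ ((1 + Real.sqrt N) / 2) * ∑ i, f i ^ 2 := by
  haveI : Nonempty (Fin N) := Fin.pos_iff_nonempty.mp hN
  obtain ⟨j, hj⟩ := Finite.exists_max f
  have hsup : (⨆ i, f i) = f j :=
    le_antisymm (ciSup_le hj) (le_ciSup (Set.Finite.bddAbove (Set.finite_range f)) j)
  have hsum : ∑ i, f i = f j + ∑ i ∈ univ.erase j, f i :=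
    (Finset.add_sum_erase _ f (mem_univ j)).symm
  have hsumsq : ∑ i, f i ^ 2 = f j ^ 2 + ∑ i ∈ univ.erase j, f i ^ 2 :=
    (Finset.add_sum_erase _ (fun i => f i ^ 2) (mem_univ j)).symm
  set M := f j with hM
  set S := ∑ i ∈ univ.erase j, f i with hS
  set Q := ∑ i ∈ univ.erase j, f i ^ 2 with hQ
  have hMnn : 0 ≤ M := hf j
  have hSnn : 0 ≤ S := Finset.sum_nonneg fun i _ => hf i
  have hQnn : 0 ≤ Q := Finset.sum_nonneg fun i _ => sq_nonneg _
  have hcard : ((univ.erase j).card : ℝ) = (N : ℝ) - 1 := by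
    rw [Finset.card_erase_of_mem (mem_univ j), Finset.card_univ, Fintype.card_fin]
    push_cast [Nat.cast_sub hN]
    ring
  have hQS : Q ≤ M * S := by
    rw [hQ, hS, Finset.mul_sum]
    exact Finset.sum_le_sum fun i _ => by
      have := hj i; have := hf i; nlinarith
  have hCS : S ^ 2 ≤ ((N : ℝ) - 1) * Q := by
    have := sq_sum_le_card_mul_sum_sq (s := univ.erase j) (f := f)
    rw [hcard] at this
    exact this
  set s := Real.sqrt N with hsdef
  have hs2 : s ^ 2 = (N : ℝ) := Real.sq_sqrt (Nat.cast_nonneg N)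
  have hs1 : 1 ≤ s := by
    rw [show (1:ℝ) = Real.sqrt 1 by simp]
    exact Real.sqrt_le_sqrt (by exact_mod_cast hN)
  rw [hsup, hsum, hsumsq]
  rcases eq_or_lt_of_le (show 1 ≤ N from hN) with h1 | h2
  · -- N = 1
    have hN1 : (N : ℝ) = 1 := by exact_mod_cast h1.symm
    have hs' : s = 1 := by
      nlinarith [Real.sqrt_nonneg (N:ℝ)]
    have hS0 : S = 0 := by nlinarith
    have hQ0 : Q = 0 := by nlinarith [hQS]
    rw [hs', hS0, hQ0]
    nlinarith
  · have hN2 : (2 : ℝ) ≤ N := by exact_mod_cast h2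
    have h1 : 0 ≤ (s + 1) / 2 * ((s - 1) * M - S) ^ 2 :=
      mul_nonneg (by linarith) (sq_nonneg _)
    have h2' : 0 ≤ (1 + s) / 2 * (((N : ℝ) - 1) * Q - S ^ 2) :=
      mul_nonneg (by linarith) (by linarith)
    have hpos : (0:ℝ) < (N : ℝ) - 1 := by linarith
    rw [← sub_nonneg]
    have key : ((N:ℝ) - 1) * (((1 + s) / 2) * (M ^ 2 + Q) - M * (M + S)) =
        (s + 1) / 2 * ((s - 1) * M - S) ^ 2 + (1 + s) / 2 * (((N : ℝ) - 1) * Q - S ^ 2) := by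
      have : (N : ℝ) = s ^ 2 := hs2.symm
      rw [this]; ring
    have hg : 0 ≤ ((N:ℝ) - 1) * (((1 + s) / 2) * (M ^ 2 + Q) - M * (M + S)) := by
      rw [key]; exact add_nonneg h1 h2'
    exact (mul_nonneg_iff_of_pos_left hpos).mp hg

private lemma diag_eig_sum {N : ℕ} (d : Fin N → ℝ)
    (H : (Matrix.diagonal (fun i => (d i : ℂ))).IsHermitian) :
    (∑ i, H.eigenvalues i = ∑ i, d i) ∧ (∑ i, H.eigenvalues i ^ 2 = ∑ i, d i ^ 2) := by
  obtain ⟨U, hUU, hD⟩ : ∃ (U : Matrix (Fin N) (Fin N) ℂ), U * star U = 1 ∧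
      star U * Matrix.diagonal (fun i => (d i : ℂ)) * U =
        Matrix.diagonal (RCLike.ofReal ∘ H.eigenvalues) :=
    ⟨(Matrix.IsHermitian.eigenvectorUnitary H : Matrix (Fin N) (Fin N) ℂ),
      (Matrix.mem_unitaryGroup_iff).mp (Matrix.IsHermitian.eigenvectorUnitary H).2,
      by have := H.conjStarAlgAut_star_eigenvectorUnitary
         rwa [Unitary.conjStarAlgAut_star_apply] at this⟩
  constructor
  · have h1 : Matrix.trace (Matrix.diagonal (RCLike.ofReal ∘ H.eigenvalues)) =
        Matrix.trace (Matrix.diagonal (fun i => (d i : ℂ))) := by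
      rw [← hD, Matrix.trace_mul_cycle, hUU, Matrix.one_mul]
    rw [Matrix.trace_diagonal, Matrix.trace_diagonal] at h1
    have h2 : ((∑ i, H.eigenvalues i : ℝ) : ℂ) = ((∑ i, d i : ℝ) : ℂ) := by
      push_cast
      simpa using h1
    exact_mod_cast h2
  · have e : U * (star U * (Matrix.diagonal (fun i => (d i : ℂ)) * U)) =
        Matrix.diagonal (fun i => (d i : ℂ)) * U := by
      rw [← Matrix.mul_assoc, hUU, Matrix.one_mul]
    have h0 : Matrix.diagonal (RCLike.ofReal ∘ H.eigenvalues) *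
        Matrix.diagonal (RCLike.ofReal ∘ H.eigenvalues) =
        star U * (Matrix.diagonal (fun i => (d i : ℂ)) *
          Matrix.diagonal (fun i => (d i : ℂ))) * U := by
      rw [← hD]
      simp only [Matrix.mul_assoc]
      rw [e]
    have h1 : Matrix.trace (Matrix.diagonal (RCLike.ofReal ∘ H.eigenvalues) *
        Matrix.diagonal (RCLike.ofReal ∘ H.eigenvalues)) =
        Matrix.trace (Matrix.diagonal (fun i => (d i : ℂ)) *
          Matrix.diagonal (fun i => (d i : ℂ))) := by
      rw [h0, Matrix.trace_mul_cycle, hUU, Matrix.one_mul]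
    rw [Matrix.diagonal_mul_diagonal, Matrix.diagonal_mul_diagonal,
      Matrix.trace_diagonal, Matrix.trace_diagonal] at h1
    have h2 : ((∑ i, H.eigenvalues i ^ 2 : ℝ) : ℂ) = ((∑ i, d i ^ 2 : ℝ) : ℂ) := by
      push_cast
      simpa [sq] using h1
    exact_mod_cast h2

private lemma diag_eig_range {N : ℕ} (d : Fin N → ℝ)
    (H : (Matrix.diagonal (fun i => (d i : ℂ))).IsHermitian) :
    Set.range H.eigenvalues = Set.range d := by
  rw [← H.spectrum_real_eq_range_eigenvalues]
  ext x
  rw [← spectrum.algebraMap_mem_iff ℂ, spectrum_diagonal]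
  simp [Complex.ofReal_inj, eq_comm]

end Aux

/-- Sharp eigenvalue inequality: for a nonzero positive semidefinite `P ∈ M_N(ℂ)`
with largest eigenvalue `λ₁`, one has
`λ₁·(λ₁+...+λ_N) ≤ ((1+√N)/2)·(λ₁²+...+λ_N²)`, and equality is attained
for some such `P`. -/
theorem eigenvalue_inequality_sharp (N : ℕ) (hN : 0 < N) :
    (∀ (P : Matrix (Fin N) (Fin N) ℂ) (hP : P.PosSemidef), P ≠ 0 →
      (⨆ i, hP.1.eigenvalues i) * (∑ i, hP.1.eigenvalues i)
        ≤ ((1 + Real.sqrt N) / 2) * ∑ i, (hP.1.eigenvalues i) ^ 2) ∧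
    (∃ (P : Matrix (Fin N) (Fin N) ℂ) (hP : P.PosSemidef), P ≠ 0 ∧
      (⨆ i, hP.1.eigenvalues i) * (∑ i, hP.1.eigenvalues i)
        = ((1 + Real.sqrt N) / 2) * ∑ i, (hP.1.eigenvalues i) ^ 2) := by
  haveI : NeZero N := ⟨hN.ne'⟩
  constructor
  · intro P hP _
    exact key_ineq N hN hP.1.eigenvalues hP.eigenvalues_nonneg
  · set s := Real.sqrt N with hsdef
    have hs2 : s ^ 2 = (N : ℝ) := Real.sq_sqrt (Nat.cast_nonneg N)
    have hs0 : 0 ≤ s := Real.sqrt_nonneg _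
    have h1s : (0:ℝ) < 1 + s := by linarith
    set t : ℝ := 1 / (1 + s) with htdef
    have ht0 : 0 ≤ t := by positivity
    have ht1 : t ≤ 1 := by
      rw [htdef, div_le_one h1s]; linarith
    set d : Fin N → ℝ := fun i => if i = 0 then 1 else t with hd
    have hdnn : ∀ i, 0 ≤ d i := by
      intro i; rw [hd]; dsimp only; split
      · norm_num
      · exact ht0
    have hd0 : d 0 = 1 := by simp [hd]
    have hP : (Matrix.diagonal (fun i => (d i : ℂ))).PosSemidef :=
      Matrix.posSemidef_diagonal_iff.mpr fun i => Complex.zero_le_real.mpr (hdnn i)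
    refine ⟨Matrix.diagonal (fun i => (d i : ℂ)), hP, ?_, ?_⟩
    · intro h
      have := congrFun (congrFun h 0) 0
      rw [Matrix.diagonal_apply_eq] at this
      rw [hd0] at this
      simp at this
    · obtain ⟨hsum, hsumsq⟩ := diag_eig_sum d hP.1
      have hrange := diag_eig_range d hP.1
      -- supremum of eigenvalues is 1
      have hsupd : (⨆ i, d i) = 1 := by
        refine le_antisymm (ciSup_le fun i => ?_) ?_
        · rw [hd]; dsimp only; split
          · exact le_rfl
          · exact ht1
        · have := le_ciSup (Set.Finite.bddAbove (Set.finite_range d)) (0 : Fin N)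
          rwa [hd0] at this
      have hsup : (⨆ i, hP.1.eigenvalues i) = 1 := by
        have h1 : (⨆ i, hP.1.eigenvalues i) = sSup (Set.range hP.1.eigenvalues) := rfl
        have h2 : (⨆ i, d i) = sSup (Set.range d) := rfl
        rw [h1, hrange, ← h2, hsupd]
      -- sums of d
      have herase : ∀ i ∈ Finset.univ.erase (0 : Fin N), d i = t := by
        intro i hi
        rw [hd]; dsimp only
        rw [if_neg (Finset.mem_erase.mp hi).1]
      have hcard : ((Finset.univ.erase (0 : Fin N)).card : ℝ) = (N : ℝ) - 1 := by
        rw [Finset.card_erase_of_mem (Finset.mem_univ _), Finset.card_univ, Fintype.card_fin]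
        push_cast [Nat.cast_sub hN]
        ring
      have hsum_d : ∑ i, d i = 1 + ((N : ℝ) - 1) * t := by
        rw [← Finset.add_sum_erase _ d (Finset.mem_univ (0 : Fin N)), hd0,
          Finset.sum_congr rfl herase, Finset.sum_const, nsmul_eq_mul, hcard]
      have hsumsq_d : ∑ i, d i ^ 2 = 1 + ((N : ℝ) - 1) * t ^ 2 := by
        rw [← Finset.add_sum_erase _ (fun i => d i ^ 2) (Finset.mem_univ (0 : Fin N)), hd0]
        rw [show ∑ i ∈ Finset.univ.erase (0 : Fin N), d i ^ 2
            = ∑ _i ∈ Finset.univ.erase (0 : Fin N), t ^ 2 from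
          Finset.sum_congr rfl fun i hi => by rw [herase i hi]]
        rw [Finset.sum_const, nsmul_eq_mul, hcard]
        norm_num
      rw [hsup, hsum, hsumsq, hsum_d, hsumsq_d]
      have hNs : (N : ℝ) = s ^ 2 := hs2.symm
      rw [hNs, htdef]
      field_simp
      ring
end
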